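/- (Antisymmetric states are entangled) Let ρ be a density matrix on ℂ^d ⊗ ℂ^d that is antisymmetric, i.e. P₋ ρ P₋ = ρ. Then ρ is not separable: ρ cannot be written as a finite convex combination ρ = Σ_k p_k σ_k ⊗ τ_k with p_k ≥ 0, Σ_k p_k = 1, and σ_k, τ_k density matrices on ℂ^d. -/

import Mathlib

open Matrix
open scoped Kronecker ComplexOrder

/-- The swap operator `S` on `ℂ^d ⊗ ℂ^d`. -/
def swapOp (d : ℕ) : Matrix (Fin d × Fin d) (Fin d × Fin d) ℂ :=
  Matrix.of fun p q => if p.1 = q.2 ∧ p.2 = q.1 then 1 else 0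

/-- The projector onto the antisymmetric subspace, `P₋ = (I - S)/2`. -/
noncomputable def Pminus (d : ℕ) : Matrix (Fin d × Fin d) (Fin d × Fin d) ℂ :=
  (2⁻¹ : ℂ) • (1 - swapOp d)

/-!
The swap operator `S` acts as `-1` on the range of `P₋`, so an antisymmetric state `ρ` satisfies
`tr (ρ S) = -tr ρ = -1`. On the other hand `tr ((σ ⊗ τ) S) = tr (σ τ) ≥ 0` for positive
semidefinite `σ, τ`, so by linearity `tr (ρ S) ≥ 0` for every separable `ρ`.
-/

theorem Matrix.PosSemidef.trace_mul_nonneg {𝕜 n : Type*} [RCLike 𝕜] [Fintype n] [DecidableEq n]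
    {A B : Matrix n n 𝕜} (hA : A.PosSemidef) (hB : B.PosSemidef) : 0 ≤ (A * B).trace := by
  open scoped MatrixOrder in
  obtain ⟨C, rfl⟩ := CStarAlgebra.nonneg_iff_eq_star_mul_self.mp hA.nonneg
  rw [star_eq_conjTranspose, Matrix.mul_assoc, trace_mul_comm]
  exact (hB.mul_mul_conjTranspose_same C).trace_nonneg

lemma swapOp_apply (d : ℕ) (p q : Fin d × Fin d) :
    swapOp d p q = if q = p.swap then 1 else 0 := by
  simp [swapOp, Prod.ext_iff, eq_comm, and_comm]

lemma swapOp_mul_self (d : ℕ) : swapOp d * swapOp d = 1 := by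
  ext p q
  simp only [mul_apply, swapOp_apply, ite_mul, one_mul, zero_mul, Finset.sum_ite_eq',
    Finset.mem_univ, if_true, Prod.swap_swap, one_apply, eq_comm]

lemma swapOp_mul_Pminus (d : ℕ) : swapOp d * Pminus d = -Pminus d := by
  simp only [Pminus, Matrix.mul_smul, Matrix.mul_sub, Matrix.mul_one, swapOp_mul_self, ← smul_neg,
    neg_sub]

lemma swapOp_mul_of_Pminus_mul_mul_Pminus_eq {d : ℕ} {ρ : Matrix (Fin d × Fin d) (Fin d × Fin d) ℂ}
    (hanti : Pminus d * ρ * Pminus d = ρ) : swapOp d * ρ = -ρ := by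
  rw [← hanti, ← Matrix.mul_assoc, ← Matrix.mul_assoc, swapOp_mul_Pminus, Matrix.neg_mul,
    Matrix.neg_mul]

lemma trace_kronecker_mul_swapOp {d : ℕ} (A B : Matrix (Fin d) (Fin d) ℂ) :
    ((A ⊗ₖ B) * swapOp d).trace = (A * B).trace := by
  rw [trace_mul_comm]
  simp only [trace, diag, mul_apply, swapOp_apply, ite_mul, one_mul, zero_mul,
    Finset.sum_ite_eq', Finset.mem_univ, if_true, kroneckerMap_apply, Fintype.sum_prod_type,
    Prod.fst_swap, Prod.snd_swap]
  exact Finset.sum_comm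

lemma trace_mul_swapOp_nonneg_of_separable {d n : ℕ} (p : Fin n → ℝ) (hp : ∀ k, 0 ≤ p k)
    {σ τ : Fin n → Matrix (Fin d) (Fin d) ℂ} (hσ : ∀ k, (σ k).PosSemidef)
    (hτ : ∀ k, (τ k).PosSemidef) :
    0 ≤ ((∑ k, (p k : ℂ) • (σ k ⊗ₖ τ k)) * swapOp d).trace := by
  rw [Matrix.sum_mul, trace_sum]
  refine Finset.sum_nonneg fun k _ => ?_
  rw [smul_mul, trace_smul, trace_kronecker_mul_swapOp]
  exact smul_nonneg (by exact_mod_cast hp k) ((hσ k).trace_mul_nonneg (hτ k))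

theorem antisymmetric_state_not_separable_general (d : ℕ)
    (ρ : Matrix (Fin d × Fin d) (Fin d × Fin d) ℂ)
    (hρtr : ρ.trace = 1)
    (hanti : Pminus d * ρ * Pminus d = ρ) :
    ¬ ∃ (n : ℕ) (p : Fin n → ℝ)
        (σ τ : Fin n → Matrix (Fin d) (Fin d) ℂ),
        (∀ k, 0 ≤ p k) ∧ (∑ k, p k = 1) ∧
        (∀ k, (σ k).PosSemidef) ∧ (∀ k, (σ k).trace = 1) ∧
        (∀ k, (τ k).PosSemidef) ∧ (∀ k, (τ k).trace = 1) ∧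
        ρ = ∑ k, (p k : ℂ) • (σ k ⊗ₖ τ k) := by
  rintro ⟨n, p, σ, τ, hp, -, hσ, -, hτ, -, hsep⟩
  have htrace : (ρ * swapOp d).trace = -1 := by
    rw [trace_mul_comm, swapOp_mul_of_Pminus_mul_mul_Pminus_eq hanti, trace_neg, hρtr]
  have hnonneg := trace_mul_swapOp_nonneg_of_separable p hp hσ hτ
  rw [← hsep, htrace] at hnonneg
  norm_num at hnonneg

/-- Every antisymmetric state on `ℂ^d ⊗ ℂ^d` is entangled: it is not
a finite convex combination of product density matrices. -/
theorem antisymmetric_state_not_separable (d : ℕ) (hd : 2 ≤ d)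
    (ρ : Matrix (Fin d × Fin d) (Fin d × Fin d) ℂ)
    (hρ : ρ.PosSemidef) (hρtr : ρ.trace = 1)
    (hanti : Pminus d * ρ * Pminus d = ρ) :
    ¬ ∃ (n : ℕ) (p : Fin n → ℝ)
        (σ τ : Fin n → Matrix (Fin d) (Fin d) ℂ),
        (∀ k, 0 ≤ p k) ∧ (∑ k, p k = 1) ∧
        (∀ k, (σ k).PosSemidef) ∧ (∀ k, (σ k).trace = 1) ∧
        (∀ k, (τ k).PosSemidef) ∧ (∀ k, (τ k).trace = 1) ∧
        ρ = ∑ k, (p k : ℂ) • (σ k ⊗ₖ τ k) :=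
  antisymmetric_state_not_separable_general d ρ hρtr hanti
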